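/- arXiv:2009.05368 — 4 statements merged into one kernel-verified Lean document; each statement's English description precedes it below -/
import Mathlib

section
/- For every integer n ≥ 3, the number of distinct maximal independent sets of the cycle graph on n vertices equals the n-th Perrin number. -/
/-!
Record a set `W ⊆ ℤ/n` by its pair states `(i ∈ W, i + 1 ∈ W)`. `W` is a maximal independent
set of the `n`-cycle iff no pair state is `(true, true)` and every window `i, i + 1, i + 2` meets
`W`, a condition on consecutive pair states. So maximal independent sets are closed walks of
length `n` in a digraph on the three states `00, 01, 10`, and their number is `trace (T ^ n)` for
its adjacency matrix `T`. Since `T ^ 3 = T + 1`, these traces satisfy the Perrin recurrence, and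
they start with `3, 0, 2`.
-/

/-- `W` is a maximal independent set of the graph `G`. -/
def MaxIndepSet {V : Type} (G : SimpleGraph V) (W : Set V) : Prop :=
  (∀ ⦃v⦄, v ∈ W → ∀ ⦃w⦄, w ∈ W → ¬ G.Adj v w) ∧
  ∀ W' : Set V, (∀ ⦃v⦄, v ∈ W' → ∀ ⦃w⦄, w ∈ W' → ¬ G.Adj v w) → W ⊆ W' → W' = W

/-- The Perrin numbers: P 0 = 3, P 1 = 0, P 2 = 2, P (n+3) = P (n+1) + P n. -/
def perrin : ℕ → ℕ
  | 0 => 3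
  | 1 => 0
  | 2 => 2
  | (n + 3) => perrin (n + 1) + perrin n

/-- The cycle graph on `n` vertices: vertices `i`, `j` are adjacent exactly when they
differ by 1 modulo `n`. -/
def cycleGraph (n : ℕ) : SimpleGraph (ZMod n) :=
  SimpleGraph.fromRel (fun i j => i = j + 1)

open Finset Matrix

theorem Fin.sum_fin_succ_pi {α M : Type*} [Fintype α] [AddCommMonoid M] {k : ℕ}
    (g : (Fin (k + 1) → α) → M) : ∑ f, g f = ∑ a, ∑ f : Fin k → α, g (Fin.cons a f) := by
  rw [← Fintype.sum_prod_type']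
  exact (Fintype.sum_equiv (Fin.consEquiv fun _ => α) _ _ fun _ => rfl).symm

theorem Fin.cons_apply_add_one {α : Type*} {k : ℕ} (a : α) (g : Fin k → α) (i : Fin (k + 1)) :
    (Fin.cons a g : Fin (k + 1) → α) (i + 1) = (Fin.snoc g a : Fin (k + 1) → α) i := by
  induction i using Fin.lastCases with
  | last => simp
  | cast j => simp [Fin.coeSucc_eq_succ]

namespace Matrix

variable {S R : Type*} [Fintype S] [DecidableEq S] [CommSemiring R]

theorem pow_succ_apply_eq_sum_prod (A : Matrix S S R) (k : ℕ) (s t : S) :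
    (A ^ (k + 1)) s t = ∑ g : Fin k → S,
      ∏ i, A ((Fin.cons s g : Fin (k + 1) → S) i) ((Fin.snoc g t : Fin (k + 1) → S) i) := by
  induction k generalizing s with
  | zero => simp [Fin.snoc]
  | succ k ih =>
    rw [pow_succ', mul_apply, Fin.sum_fin_succ_pi]
    refine sum_congr rfl fun u _ => ?_
    rw [ih, mul_sum]
    refine sum_congr rfl fun g _ => ?_
    rw [← Fin.cons_snoc_eq_snoc_cons]
    conv_rhs => rw [Fin.prod_univ_succ]
    simp only [Fin.cons_zero, Fin.cons_succ]

theorem trace_pow_succ_eq_sum_prod (A : Matrix S S R) (m : ℕ) :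
    trace (A ^ (m + 1)) = ∑ f : Fin (m + 1) → S, ∏ i, A (f i) (f (i + 1)) := by
  simp only [trace, diag, pow_succ_apply_eq_sum_prod, Fin.sum_fin_succ_pi, Fin.cons_apply_add_one]

theorem card_cyclic_chains_eq_trace (r : S → S → Prop) [DecidableRel r] (m : ℕ) :
    Fintype.card {f : Fin (m + 1) → S // ∀ i, r (f i) (f (i + 1))} =
      trace (of (fun s t => if r s t then 1 else 0) ^ (m + 1)) := by
  rw [trace_pow_succ_eq_sum_prod, Fintype.card_subtype, card_filter]
  simp [prod_boole]

end Matrix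

theorem maxIndepSet_iff_dominating {V : Type} (G : SimpleGraph V) (W : Set V) :
    MaxIndepSet G W ↔ (∀ ⦃v⦄, v ∈ W → ∀ ⦃w⦄, w ∈ W → ¬ G.Adj v w) ∧
      ∀ v ∉ W, ∃ w ∈ W, G.Adj v w := by
  refine and_congr_right fun hW => ⟨fun hmax v hv => ?_, fun hdom W' hW' hsub => ?_⟩
  · by_contra! hfree
    have hindep : ∀ ⦃x⦄, x ∈ insert v W → ∀ ⦃y⦄, y ∈ insert v W → ¬ G.Adj x y := by
      rintro x (rfl | hx) y (rfl | hy)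
      · exact G.loopless.irrefl _
      · exact hfree _ hy
      · exact fun h => hfree _ hx h.symm
      · exact hW hx hy
    exact hv (hmax _ hindep (Set.subset_insert v W) ▸ Set.mem_insert v W)
  · refine Set.Subset.antisymm (fun v hv => ?_) hsub
    by_contra hvW
    obtain ⟨w, hw, hvw⟩ := hdom v hvW
    exact hW' hv (hsub hw) hvw

theorem cycleGraph_adj {n : ℕ} (hn : n ≠ 1) {v w : ZMod n} :
    (cycleGraph n).Adj v w ↔ v = w + 1 ∨ w = v + 1 := by
  have : Nontrivial (ZMod n) := ZMod.nontrivial_iff.mpr hn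
  simp only [cycleGraph, SimpleGraph.fromRel_adj, and_iff_right_iff_imp]
  rintro (rfl | rfl) <;> simp

theorem maxIndepSet_cycleGraph_iff {n : ℕ} (hn : n ≠ 1) (W : Set (ZMod n)) :
    MaxIndepSet (cycleGraph n) W ↔
      ∀ i, ¬(i ∈ W ∧ i + 1 ∈ W) ∧ (i ∈ W ∨ i + 1 ∈ W ∨ i + 1 + 1 ∈ W) := by
  simp only [maxIndepSet_iff_dominating, cycleGraph_adj hn, forall_and]
  refine and_congr ⟨fun h i hi => ?_, fun h v hv w hw => ?_⟩ ⟨fun h i => ?_, fun h v hv => ?_⟩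
  · exact h hi.1 hi.2 (Or.inr rfl)
  · rintro (rfl | rfl)
    exacts [h w ⟨hw, hv⟩, h v ⟨hv, hw⟩]
  · by_contra! hi
    obtain ⟨w, hw, hiw | rfl⟩ := h (i + 1) hi.2.1
    · exact hi.1 (add_right_cancel hiw ▸ hw)
    · exact hi.2.2 hw
  · rcases h (v - 1) with h | h | h
    · exact ⟨v - 1, h, Or.inl (by ring)⟩
    · exact absurd (by simpa using h) hv
    · exact ⟨v + 1, by simpa using h, Or.inr rfl⟩

/-- The state of a set `W` at vertex `i` is `(i ∈ W, i + 1 ∈ W)`. -/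
abbrev PairState : Type := {p : Bool × Bool // p ≠ (true, true)}

def PairState.Step (a b : PairState) : Prop :=
  a.1.2 = b.1.1 ∧ (a.1.1 || a.1.2 || b.1.2) = true

instance : DecidableRel PairState.Step := fun _ _ => by unfold PairState.Step; infer_instance

theorem PairState.Step.not_and_or {a b : PairState} (h : a.Step b) :
    ¬(a.1.1 = true ∧ b.1.1 = true) ∧ (a.1.1 = true ∨ b.1.1 = true ∨ b.1.2 = true) := by
  revert a b
  decide

def transferMatrix : Matrix PairState PairState ℕ := of fun a b => if a.Step b then 1 else 0

theorem transferMatrix_pow_three : transferMatrix ^ 3 = transferMatrix + 1 := by decide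

theorem trace_transferMatrix_pow : ∀ n, trace (transferMatrix ^ n) = perrin n
  | 0 | 1 | 2 => by decide
  | n + 3 => by
    rw [pow_add, transferMatrix_pow_three, mul_add, mul_one, ← pow_succ, trace_add,
      trace_transferMatrix_pow (n + 1), trace_transferMatrix_pow n]
    rfl

open Classical in
noncomputable def maxIndepSetEquivChains {n : ℕ} (hn : n ≠ 1) :
    {W : Set (ZMod n) // MaxIndepSet (cycleGraph n) W} ≃
      {f : ZMod n → PairState // ∀ i, (f i).Step (f (i + 1))} where
  toFun W :=
    have hW := (maxIndepSet_cycleGraph_iff hn W.1).1 W.2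
    ⟨fun i => ⟨(decide (i ∈ W.1), decide (i + 1 ∈ W.1)), by simpa using (hW i).1⟩,
      fun i => ⟨rfl, by simpa [or_assoc] using (hW i).2⟩⟩
  invFun f := ⟨{i | (f.1 i).1.1}, (maxIndepSet_cycleGraph_iff hn _).2 fun i => by
    have h := (f.2 i).not_and_or
    rwa [(f.2 (i + 1)).1] at h⟩
  left_inv W := by ext; simp
  right_inv f := by
    ext i : 2
    exact Subtype.ext (Prod.ext (by simp) (by simp [(f.2 i).1]))

theorem stmt8 (n : ℕ) (hn : 3 ≤ n) :
    {W : Set (ZMod n) | MaxIndepSet (cycleGraph n) W}.ncard = perrin n := by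
  obtain ⟨m, rfl⟩ : ∃ m, n = m + 1 := ⟨n - 1, by omega⟩
  rw [← Nat.card_coe_set_eq, ← trace_transferMatrix_pow]
  -- `ZMod (m + 1)` is `Fin (m + 1)` by definition.
  calc Nat.card {W : Set (ZMod (m + 1)) // MaxIndepSet (cycleGraph (m + 1)) W}
      = Nat.card {f : Fin (m + 1) → PairState // ∀ i, (f i).Step (f (i + 1))} :=
        Nat.card_congr (maxIndepSetEquivChains (by omega))
    _ = trace (transferMatrix ^ (m + 1)) := by
        rw [Nat.card_eq_fintype_card, card_cyclic_chains_eq_trace]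
        rfl
end

section
/- Let G = (V, X) be a chordal graph whose vertex set V admits a well-ordering. Then there is a linear ordering < of V such that for each v ∈ V the set {w : w < v and {w,v} ∈ X} is a clique. -/
/-- `G` is chordal: every cycle with at least four vertices has a chord, i.e. an edge
joining two non-consecutive vertices of the cycle. -/
def Chordal {V : Type} (G : SimpleGraph V) : Prop :=
  ∀ n : ℕ, 4 ≤ n → ∀ f : ZMod n → V, Function.Injective f →
    (∀ i : ZMod n, G.Adj (f i) (f (i + 1))) →
    ∃ i j : ZMod n, j ≠ i + 1 ∧ i ≠ j + 1 ∧ i ≠ j ∧ G.Adj (f i) (f j)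

/-!
If two neighbours `x`, `y` of a vertex `v` are joined by a walk that avoids the closed
neighbourhood of `v`, then a shortest such walk is a chordless path, and closing it up through
`v` gives a cycle whose only possible chord is `xy`; chordality forces `x ~ y`. So for a vertex
`v` with a non-neighbour `z`, the neighbours of `v` attached to the component `C` of `z` outside
the closed neighbourhood of `v` form a clique `S`, and induction on `C ∪ S`, avoiding the clique
`S`, produces a simplicial vertex in `C` (Dirac). Removing simplicial vertices one at a time
ranks every finite vertex set as a perfect elimination ordering, and an ultrafilter on the
finite subsets of `V` glues these rankings into one strict total order.
-/

namespace SimpleGraph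

variable {V : Type*} {G : SimpleGraph V}

namespace Walk

variable {u v : V}

theorem exists_length_lt_of_adj_getVert (p : G.Walk u v) {i j : ℕ} (hij : i < j)
    (hj : j ≤ p.length) (hadj : G.Adj (p.getVert i) (p.getVert j))
    (hnot : s(p.getVert i, p.getVert j) ∉ p.edges) :
    ∃ q : G.Walk u v, q.length < p.length ∧ q.support ⊆ p.support := by
  have hji : j ≠ i + 1 := by
    rintro rfl
    exact hnot ((mk_mem_edges_iff_exists p).mpr ⟨i, by omega, rfl⟩)
  refine ⟨(p.take i).append (cons hadj (p.drop j)), ?_, ?_⟩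
  · simp only [length_append, take_length, length_cons, drop_length]
    omega
  · intro w hw
    rw [support_append, support_cons, List.tail_cons, List.mem_append] at hw
    rcases hw with hw | hw
    · rw [support_take] at hw
      exact List.take_subset _ _ hw
    · rw [drop_support_eq_support_drop_min] at hw
      exact List.drop_subset _ _ hw

theorem exists_length_lt_of_isChord (p : G.Walk u v) {e : Sym2 V} (he : p.IsChord e) :
    ∃ q : G.Walk u v, q.length < p.length ∧ q.support ⊆ p.support := by
  induction e using Sym2.ind with | _ a b => ?_
  obtain ⟨hab, hnot, ha, hb⟩ := isChord_sym2Mk.mp he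
  obtain ⟨i, rfl, hi⟩ := mem_support_iff_exists_getVert.mp ha
  obtain ⟨j, rfl, hj⟩ := mem_support_iff_exists_getVert.mp hb
  rcases lt_trichotomy i j with hij | rfl | hji
  · exact p.exists_length_lt_of_adj_getVert hij hj hab hnot
  · exact absurd hab (G.loopless.irrefl _)
  · exact p.exists_length_lt_of_adj_getVert hji hi hab.symm (by rwa [Sym2.eq_swap])

theorem exists_isPath_isChordless_support_subset (p : G.Walk u v) :
    ∃ q : G.Walk u v, q.IsPath ∧ q.IsChordless ∧ q.support ⊆ p.support := by
  classical
  induction h : p.length using Nat.strong_induction_on generalizing p with | _ n ih => ?_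
  by_cases hq : p.bypass.IsChordless
  · exact ⟨p.bypass, p.bypass_isPath, hq, p.support_bypass_subset_support⟩
  obtain ⟨e, he⟩ : ∃ e, p.bypass.IsChord e := by simpa [IsChordless] using hq
  obtain ⟨q, hlt, hsub⟩ := p.bypass.exists_length_lt_of_isChord he
  obtain ⟨r, hr, hr', hsub'⟩ :=
    ih q.length (h ▸ hlt.trans_le p.length_bypass_le_length) q rfl
  exact ⟨r, hr, hr', fun w hw => p.support_bypass_subset_support (hsub (hsub' hw))⟩

theorem IsPath.cons_concat_isCycle {x y w : V} {q : G.Walk x y} (hq : q.IsPath)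
    (hw : w ∉ q.support) (hxy : x ≠ y) (hwx : G.Adj w x) (hyw : G.Adj y w) :
    (cons hwx (q.concat hyw)).IsCycle := by
  refine (cons_isCycle_iff _ _).mpr ⟨hq.concat hw hyw, ?_⟩
  rw [edges_concat, List.concat_eq_append, List.mem_append, List.mem_singleton, Sym2.eq_iff]
  rintro (h | ⟨rfl, -⟩ | ⟨-, rfl⟩)
  · exact hw (q.fst_mem_support_of_mem_edges h)
  · exact hyw.ne rfl
  · exact hxy rfl

end Walk

theorem IsClique.exists_not_adj_of_not_isClique {K s : Set V} (hK : G.IsClique K)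
    (hs : ¬ G.IsClique s) :
    ∃ v ∈ s, ∃ z ∈ s, v ≠ z ∧ ¬ G.Adj v z ∧ ∀ k ∈ s ∩ K, k = v ∨ G.Adj v k := by
  by_cases hKs : ∃ v ∈ s ∩ K, ∃ z ∈ s, v ≠ z ∧ ¬ G.Adj v z
  · obtain ⟨v, hv, z, hz, hvz, hnadj⟩ := hKs
    refine ⟨v, hv.1, z, hz, hvz, hnadj, fun k hk => ?_⟩
    rw [or_iff_not_imp_left]
    exact hK hv.2 hk.2 ∘ Ne.symm
  · obtain ⟨a, ha, b, hb, hab, hnadj⟩ : ∃ a ∈ s, ∃ b ∈ s, a ≠ b ∧ ¬ G.Adj a b := by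
      simpa [IsClique, Set.Pairwise] using hs
    push Not at hKs
    refine ⟨a, ha, b, hb, hab, hnadj, fun k hk => ?_⟩
    rw [or_iff_not_imp_left]
    exact fun hka => (hKs k hk a ha hka).symm

theorem exists_component_outside_closedNbhd (s : Finset V) {v z : V} (hz : z ∈ s) (hzv : z ≠ v)
    (hvz : ¬ G.Adj v z) :
    ∃ C ⊆ s, z ∈ C ∧ (∀ c ∈ C, c ≠ v ∧ ¬ G.Adj v c) ∧
      (∀ a ∈ C, ∀ b ∈ C, ∃ p : G.Walk a b, ∀ w ∈ p.support, w ≠ v ∧ ¬ G.Adj v w) ∧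
      ∀ c ∈ C, ∀ u ∈ s, G.Adj c u → G.Adj v u ∨ u ∈ C := by
  classical
  let T : Set V := {w | w ≠ v ∧ ¬ G.Adj v w}
  let C := s.filter fun w => ∃ p : G.Walk z w, ∀ u ∈ p.support, u ∈ s ∧ u ∈ T
  have hCT : ∀ c ∈ C, c ∈ T := fun c hc => by
    obtain ⟨-, p, hp⟩ := Finset.mem_filter.mp hc
    exact (hp c p.end_mem_support).2
  refine ⟨C, Finset.filter_subset _ _, ?_, hCT, fun a ha b hb => ?_, fun c hc u hus hcu => ?_⟩
  · exact Finset.mem_filter.mpr ⟨hz, Walk.nil, by simpa [T, hzv, hvz] using hz⟩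
  · obtain ⟨-, p, hp⟩ := Finset.mem_filter.mp ha
    obtain ⟨-, q, hq⟩ := Finset.mem_filter.mp hb
    refine ⟨p.reverse.append q, fun w hw => ?_⟩
    rw [Walk.support_append, List.mem_append, Walk.support_reverse, List.mem_reverse] at hw
    rcases hw with hw | hw
    exacts [(hp w hw).2, (hq w (List.mem_of_mem_tail hw)).2]
  · rw [or_iff_not_imp_left]
    intro hvu
    have huv : u ≠ v := by
      rintro rfl
      exact (hCT c hc).2 hcu.symm
    obtain ⟨-, p, hp⟩ := Finset.mem_filter.mp hc
    refine Finset.mem_filter.mpr ⟨hus, p.concat hcu, fun t ht => ?_⟩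
    rw [Walk.support_concat, List.mem_append, List.mem_singleton] at ht
    rcases ht with ht | rfl
    exacts [hp t ht, ⟨hus, huv, hvu⟩]

def IsPerfectEliminationRanking (G : SimpleGraph V) (s : Set V) (ρ : V → ℕ) : Prop :=
  Set.InjOn ρ s ∧ ∀ v ∈ s, G.IsClique {w ∈ s | ρ w < ρ v ∧ G.Adj w v}

theorem exists_isStrictTotalOrder_isClique_of_forall_finset
    (h : ∀ s : Finset V, ∃ ρ : V → ℕ, G.IsPerfectEliminationRanking s ρ) :
    ∃ r : V → V → Prop, IsStrictTotalOrder V r ∧ ∀ v : V, G.IsClique {w | r w v ∧ G.Adj w v} := by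
  classical
  choose ρ hinj hρ using h
  let U : Ultrafilter (Finset V) := .of Filter.atTop
  have hU : ∀ s₀ : Finset V, ∀ᶠ t in U, s₀ ⊆ t :=
    fun s₀ => Ultrafilter.of_le _ (Filter.eventually_ge_atTop s₀)
  let r : V → V → Prop := fun u v => ∀ᶠ t in U, u ∈ t ∧ v ∈ t ∧ ρ t u < ρ t v
  refine ⟨r, { trichotomous := ?_, irrefl := ?_, trans := ?_ }, ?_⟩
  · intro u v huv hvu
    by_contra hne
    have : ∀ᶠ t in U, (u ∈ t ∧ v ∈ t ∧ ρ t u < ρ t v) ∨ (v ∈ t ∧ u ∈ t ∧ ρ t v < ρ t u) := by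
      filter_upwards [hU {u, v}] with t ht
      have hu : u ∈ t := ht (by simp)
      have hv : v ∈ t := ht (by simp)
      rcases lt_trichotomy (ρ t u) (ρ t v) with h | h | h
      exacts [.inl ⟨hu, hv, h⟩, absurd (hinj t hu hv h) hne, .inr ⟨hv, hu, h⟩]
    exact (Ultrafilter.eventually_or.mp this).elim huv hvu
  · intro u hu
    obtain ⟨t, -, -, h⟩ := hu.exists
    exact h.false
  · intro u v w huv hvw
    filter_upwards [huv, hvw] with t h₁ h₂
    exact ⟨h₁.1, h₂.2.1, h₁.2.2.trans h₂.2.2⟩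
  · rintro v u ⟨huv, hu⟩ w ⟨hwv, hw⟩ huw
    obtain ⟨t, ⟨hut, hvt, hρu⟩, hwt, -, hρw⟩ := (huv.and hwv).exists
    exact hρ t v hvt ⟨hut, hρu, hu⟩ ⟨hwt, hρw, hw⟩ huw

end SimpleGraph

namespace Chordal

open SimpleGraph Walk

variable {V : Type} {G : SimpleGraph V}

theorem not_isChordless_of_isCycle (hG : Chordal G) {u : V} {c : G.Walk u u} (hc : c.IsCycle)
    (h4 : 4 ≤ c.length) : ¬ c.IsChordless := by
  set n := c.length
  have : NeZero n := ⟨by omega⟩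
  set f : ZMod n → V := fun i => c.getVert i.val
  have hf : ∀ k ≤ n, f k = c.getVert k := by
    intro k hk
    rcases hk.lt_or_eq with hk | rfl
    · simp only [f, ZMod.val_cast_of_lt hk]
    · simp only [f, ZMod.natCast_self, ZMod.val_zero, getVert_zero]
      exact c.getVert_length.symm
  have hinj : f.Injective := by
    intro i j hij
    exact ZMod.val_injective n
      (hc.getVert_injOn' (Nat.le_sub_one_of_lt i.val_lt) (Nat.le_sub_one_of_lt j.val_lt) hij)
  have hsucc : ∀ i : ZMod n, f (i + 1) = c.getVert (i.val + 1) := by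
    intro i
    rw [← hf _ (ZMod.val_lt i), Nat.cast_succ, ZMod.natCast_zmod_val]
  obtain ⟨i, j, hji, hij, hne, hadj⟩ := hG n h4 f hinj fun i => by
    rw [hsucc]; exact c.adj_getVert_succ (ZMod.val_lt i)
  intro hchordless
  obtain ⟨k, hk, hkij⟩ := (mk_mem_edges_iff_exists c).mp
    (hchordless.mem_edges (c.getVert_mem_support _) (c.getVert_mem_support _) hadj)
  rw [← hf k hk.le, ← hf (k + 1) hk, Nat.cast_add, Nat.cast_one, Sym2.eq_iff] at hkij
  rcases hkij with ⟨hki, hkj⟩ | ⟨hkj, hki⟩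
  · exact hji (hinj hkj ▸ hinj hki ▸ rfl)
  · exact hij (hinj hki ▸ hinj hkj ▸ rfl)

theorem adj_of_isChordless (hG : Chordal G) {v x y : V} (hx : G.Adj v x) (hy : G.Adj v y)
    (hxy : x ≠ y) {q : G.Walk x y} (hq : q.IsPath) (hqc : q.IsChordless)
    (hqv : ∀ w ∈ q.support, w ≠ x → w ≠ y → w ≠ v ∧ ¬ G.Adj v w) : G.Adj x y := by
  by_contra hnadj
  have hvq : v ∉ q.support := fun hv => (hqv v hv hx.ne hy.ne).1 rfl
  have hlen : 2 ≤ q.length := by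
    by_contra! h
    interval_cases hl : q.length
    · exact hxy (eq_of_length_eq_zero hl)
    · exact hnadj (adj_of_length_eq_one hl)
  let c := cons hx (q.concat hy.symm)
  have hc4 : 4 ≤ c.length := by
    simp only [c, length_cons, length_concat]
    omega
  refine hG.not_isChordless_of_isCycle (hq.cons_concat_isCycle hvq hxy hx hy.symm) hc4
    (isChordless_iff_forall_mem_edges.mpr ?_)
  have hvb : ∀ b ∈ q.support, G.Adj v b → s(v, b) ∈ c.edges := by
    intro b hb hvb
    by_cases hbx : b = x
    · simp [c, hbx]
    by_cases hby : b = y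
    · simp [c, hby, edges_concat, Sym2.eq_swap]
    exact absurd hvb (hqv b hb hbx hby).2
  intro a b ha hb hab
  simp only [support_cons, support_concat, List.mem_cons, List.mem_append,
    List.not_mem_nil, or_false] at ha hb
  rcases ha with rfl | ha | rfl <;> rcases hb with rfl | hb | rfl
  all_goals first
    | exact absurd hab (G.loopless.irrefl _)
    | exact hvb b hb hab
    | (rw [Sym2.eq_swap]; exact hvb a ha hab.symm)
    | simp [edges_concat, hqc.mem_edges ha hb hab]

theorem adj_of_walk_outside_closedNbhd (hG : Chordal G) {v x y a b : V} (hx : G.Adj v x)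
    (hy : G.Adj v y) (hxy : x ≠ y) (hxa : G.Adj x a) (hyb : G.Adj y b) (p : G.Walk a b)
    (hp : ∀ w ∈ p.support, w ≠ v ∧ ¬ G.Adj v w) : G.Adj x y := by
  obtain ⟨q, hq, hqc, hsub⟩ :=
    (cons hxa (p.concat hyb.symm)).exists_isPath_isChordless_support_subset
  refine hG.adj_of_isChordless hx hy hxy hq hqc fun w hw hwx hwy => ?_
  have := hsub hw
  simp only [support_cons, support_concat, List.mem_cons, List.mem_append, List.not_mem_nil,
    or_false] at this
  rcases this with rfl | hw | rfl
  exacts [absurd rfl hwx, hp w hw, absurd rfl hwy]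

theorem isClique_adj_of_walks_outside_closedNbhd (hG : Chordal G) {v : V} {C : Set V}
    (hC : ∀ a ∈ C, ∀ b ∈ C, ∃ p : G.Walk a b, ∀ w ∈ p.support, w ≠ v ∧ ¬ G.Adj v w) :
    G.IsClique {x | G.Adj v x ∧ ∃ c ∈ C, G.Adj x c} := by
  rintro x ⟨hvx, a, ha, hxa⟩ y ⟨hvy, b, hb, hyb⟩ hxy
  obtain ⟨p, hp⟩ := hC a ha b hb
  exact hG.adj_of_walk_outside_closedNbhd hvx hvy hxy hxa hyb p hp

theorem exists_notMem_isClique_inter_neighborSet (hG : Chordal G) (s : Finset V) {K : Set V}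
    (hK : G.IsClique K) (hsK : ¬ (s : Set V) ⊆ K) :
    ∃ w ∈ s, w ∉ K ∧ G.IsClique (s ∩ G.neighborSet w) := by
  classical
  induction s using Finset.strongInduction generalizing K with | H s ih => ?_
  by_cases hs : G.IsClique (s : Set V)
  · obtain ⟨w, hws, hwK⟩ := Set.not_subset.mp hsK
    exact ⟨w, hws, hwK, hs.subset Set.inter_subset_left⟩
  -- `s ∩ K` lies in the closed neighbourhood of `v`, so the vertex found below is not in `K`.
  obtain ⟨v, hvs, z, hzs, hvz, hvz', hKv⟩ := hK.exists_not_adj_of_not_isClique hs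
  obtain ⟨C, hCs, hzC, hCv, hCwalk, hCnbr⟩ :=
    exists_component_outside_closedNbhd s hzs hvz.symm hvz'
  let S := s.filter fun x => G.Adj v x ∧ ∃ c ∈ C, G.Adj x c
  have hS : G.IsClique (S : Set V) :=
    (hG.isClique_adj_of_walks_outside_closedNbhd hCwalk).subset
      fun x hx => (Finset.mem_filter.mp hx).2
  have hvCS : v ∉ C ∪ S := by
    rw [Finset.mem_union, Finset.mem_filter]
    rintro (hvC | ⟨-, hvv, -⟩)
    exacts [(hCv v hvC).1 rfl, G.loopless.irrefl v hvv]
  have hCSs : C ∪ S ⊂ s := Finset.ssubset_iff_subset_ne.mpr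
    ⟨Finset.union_subset hCs (Finset.filter_subset _ _), fun h => hvCS (h ▸ hvs)⟩
  have hzS : z ∉ S := fun h => hvz' (Finset.mem_filter.mp h).2.1
  obtain ⟨w, hwCS, hwS, hwclique⟩ := ih _ hCSs hS fun h => hzS (h (by simp [hzC]))
  have hwC : w ∈ C := (Finset.mem_union.mp hwCS).resolve_right hwS
  obtain ⟨hwv, hvw⟩ := hCv w hwC
  refine ⟨w, hCs hwC, fun hwK => (hKv w ⟨hCs hwC, hwK⟩).elim hwv hvw, hwclique.subset ?_⟩
  rintro u ⟨hus, hwu⟩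
  refine ⟨?_, hwu⟩
  rcases hCnbr w hwC u hus hwu with hvu | huC
  · exact Finset.mem_union_right _ (Finset.mem_filter.mpr ⟨hus, hvu, w, hwC, hwu.symm⟩)
  · exact Finset.mem_union_left _ huC

theorem exists_isPerfectEliminationRanking (hG : Chordal G) (s : Finset V) :
    ∃ ρ : V → ℕ, G.IsPerfectEliminationRanking s ρ := by
  classical
  induction s using Finset.strongInduction with | H s ih => ?_
  rcases s.eq_empty_or_nonempty with rfl | ⟨z, hz⟩
  · exact ⟨fun _ => 0, by simp, by simp⟩
  obtain ⟨w, hws, -, hw⟩ :=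
    hG.exists_notMem_isClique_inter_neighborSet s (K := ∅) (by simp) fun h => h hz
  obtain ⟨ρ, hinj, hρ⟩ := ih (s.erase w) (Finset.erase_ssubset hws)
  set N := (s.erase w).sup ρ + 1
  have hlt : ∀ u ∈ s.erase w, ρ u < N := fun u hu => Nat.lt_succ_of_le (Finset.le_sup hu)
  have hupd : ∀ u ∈ s.erase w, Function.update ρ w N u = ρ u :=
    fun u hu => Function.update_of_ne (Finset.ne_of_mem_erase hu) _ _
  have hs : (s : Set V) = insert w ↑(s.erase w) := by simp [hws]
  refine ⟨Function.update ρ w N, ?_, fun v hv => ?_⟩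
  · rw [hs, Set.injOn_insert (by simp)]
    refine ⟨hinj.congr fun u hu => (hupd u hu).symm, ?_⟩
    rintro ⟨u, hu, hu'⟩
    rw [hupd u hu, Function.update_self] at hu'
    exact (hlt u hu).ne hu'
  by_cases hvw : v = w
  · subst hvw
    refine hw.subset ?_
    rintro u ⟨hu, -, hadj⟩
    exact ⟨hu, hadj.symm⟩
  have hv' : v ∈ s.erase w := Finset.mem_erase.mpr ⟨hvw, hv⟩
  refine (hρ v hv').subset ?_
  rintro u ⟨hu, hρuv, hadj⟩
  have huw : u ≠ w := by
    rintro rfl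
    rw [Function.update_self, hupd v hv'] at hρuv
    exact (hlt v hv').not_gt hρuv
  have hu' : u ∈ s.erase w := Finset.mem_erase.mpr ⟨huw, hu⟩
  rw [hupd u hu', hupd v hv'] at hρuv
  exact ⟨hu', hρuv, hadj⟩

end Chordal

theorem stmt10_general (V : Type) (G : SimpleGraph V) (hch : Chordal G) :
    ∃ r : V → V → Prop, IsStrictTotalOrder V r ∧
      ∀ v : V, G.IsClique {w | r w v ∧ G.Adj w v} :=
  SimpleGraph.exists_isStrictTotalOrder_isClique_of_forall_finset
    hch.exists_isPerfectEliminationRanking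

theorem stmt10 (V : Type) (G : SimpleGraph V)
    (hwo : ∃ r : V → V → Prop, IsWellOrder V r) (hch : Chordal G) :
    ∃ r : V → V → Prop, IsStrictTotalOrder V r ∧
      ∀ v : V, G.IsClique {w | r w v ∧ G.Adj w v} :=
  stmt10_general V G hch
end

section
/- Assume the union of any countable family of countable sets is countable (UT(ℵ0,ℵ0,ℵ0)). Let (P, ≤) be a partially ordered set such that P admits a well-ordering, every antichain in P is finite, and every chain in P is countable. Then P is countable. -/
/-- UT(ℵ₀,ℵ₀,ℵ₀) : the union of any countable family of countable sets is countable. -/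
def UTOmega : Prop :=
  ∀ (α : Type) (A : ℕ → Set α), (∀ n, (A n).Countable) → (⋃ n, A n).Countable

theorem stmt11 (hUT : UTOmega) (P : Type) [PartialOrder P]
    (hwo : ∃ r : P → P → Prop, IsWellOrder P r)
    (hanti : ∀ A : Set P, IsAntichain (· ≤ ·) A → A.Finite)
    (hchain : ∀ C : Set P, IsChain (· ≤ ·) C → C.Countable) :
    Countable P := by
  by_contra hP
  have huniv : ¬ (Set.univ : Set P).Countable := by
    rwa [Set.countable_univ_iff]
  have key : ∃ T : Set P, ¬ T.Countable ∧
      ∀ x ∈ T, {y ∈ T | (¬ x ≤ y ∧ ¬ y ≤ x)}.Countable := by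
    by_contra hkey
    push_neg at hkey
    -- hkey : ∀ T, ¬T.Countable → ∃ x ∈ T, ¬ countable incomparables
    have step : ∀ T : {T : Set P // ¬ T.Countable},
        ∃ p : P × {T : Set P // ¬ T.Countable}, p.1 ∈ T.1 ∧
          p.2.1 = {y ∈ T.1 | (¬ p.1 ≤ y ∧ ¬ y ≤ p.1)} := by
      rintro ⟨T, hT⟩
      obtain ⟨x, hx, hxc⟩ := hkey T hT
      exact ⟨(x, ⟨_, hxc⟩), hx, rfl⟩
    classical
    let F : {T : Set P // ¬ T.Countable} → P × {T : Set P // ¬ T.Countable} :=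
      fun T => (step T).choose
    let g : ℕ → {T : Set P // ¬ T.Countable} := fun n =>
      Nat.rec ⟨Set.univ, huniv⟩ (fun _ T => (F T).2) n
    let x : ℕ → P := fun n => (F (g n)).1
    have hx1 : ∀ n, x n ∈ (g n).1 := fun n => (step (g n)).choose_spec.1
    have hx2 : ∀ n, (g (n+1)).1 = {y ∈ (g n).1 | (¬ x n ≤ y ∧ ¬ y ≤ x n)} :=
      fun n => (step (g n)).choose_spec.2
    have hmono : ∀ m n, m ≤ n → (g n).1 ⊆ (g m).1 := by
      intro m n h
      induction n with
      | zero => simp_all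
      | succ k ih =>
        rcases Nat.lt_or_ge m (k+1) with h' | h'
        · intro y hy
          rw [hx2 k] at hy
          exact ih (Nat.lt_succ_iff.mp h') hy.1
        · have : m = k + 1 := le_antisymm h h'
          subst this; exact subset_rfl
    have hincomp : ∀ m n, m < n → ¬ x m ≤ x n ∧ ¬ x n ≤ x m := by
      intro m n h
      have : x n ∈ (g (m+1)).1 := hmono (m+1) n h (hx1 n)
      rw [hx2 m] at this
      exact this.2
    have hanti' : IsAntichain (· ≤ ·) (Set.range x) := by
      rintro a ⟨m, rfl⟩ b ⟨n, rfl⟩ hne hle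
      rcases Nat.lt_trichotomy m n with h | h | h
      · exact (hincomp m n h).1 hle
      · exact hne (by rw [h])
      · exact (hincomp n m h).2 hle
    have hinj : Function.Injective x := by
      intro m n h
      by_contra hne
      rcases Nat.lt_or_gt_of_ne hne with h' | h'
      · exact (hincomp m n h').1 (le_of_eq h)
      · exact (hincomp n m h').1 (le_of_eq h.symm)
    exact Set.infinite_range_of_injective hinj (hanti (Set.range x) hanti')
  obtain ⟨T, hT, hTc⟩ := key
  obtain ⟨C, hC, -⟩ := IsChain.exists_maxChain (show IsChain (· ≤ ·) (∅ : Set ↥T) by simp [IsChain])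
  have hCchain : IsChain (· ≤ ·) (Subtype.val '' C : Set P) := by
    rintro a ⟨a', ha', rfl⟩ b ⟨b', hb', rfl⟩ hne
    have := hC.1 ha' hb' (fun h => hne (by rw [h]))
    exact this
  have hCc : (Subtype.val '' C).Countable := hchain _ hCchain
  have hCc' : C.Countable := Set.countable_of_injective_of_countable_image Subtype.val_injective.injOn hCc
  -- the union of image and all incomparable sets is countable
  set U : Set P := (Subtype.val '' C) ∪ ⋃ c ∈ (Subtype.val '' C), {y ∈ T | (¬ c ≤ y ∧ ¬ y ≤ c)} with hU
  have hUc : U.Countable := by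
    apply Set.Countable.union hCc
    exact Set.Countable.biUnion hCc (fun c hc => hTc c (by
      obtain ⟨c', hc', rfl⟩ := hc; exact c'.2))
  have : ¬ (T ⊆ U) := by
    intro hsub
    exact hT (hUc.mono hsub)
  obtain ⟨y, hyT, hyU⟩ := Set.not_subset.mp this
  have hyC : (⟨y, hyT⟩ : ↥T) ∉ C := by
    intro h
    exact hyU (Or.inl ⟨_, h, rfl⟩)
  have hchain' : IsChain (· ≤ ·) (insert (⟨y, hyT⟩ : ↥T) C) := by
    apply hC.1.insert
    intro c hc hne
    have hcomp : (c : P) ≤ y ∨ y ≤ (c : P) := by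
      by_contra hcon
      push_neg at hcon
      apply hyU
      right
      exact Set.mem_biUnion ⟨c, hc, rfl⟩ ⟨hyT, hcon⟩
    rcases hcomp with h | h
    · exact Or.inr h
    · exact Or.inl h
  have := hC.2 hchain' (Set.subset_insert _ _)
  exact hyC (this ▸ Set.mem_insert _ _)
end

section
/- Let ℵ_α be a regular aleph. Assume that the union of any family of at most ℵ_α sets, each of cardinality at most ℵ_α, has cardinality at most ℵ_α (UT(ℵ_α,ℵ_α,ℵ_α)). Let (P, ≤) be a partially ordered set such that P admits a well-ordering, every antichain in P is finite, and every chain in P has cardinality at most ℵ_α. Then P has cardinality at most ℵ_α. -/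
open Cardinal Set

section Aux
variable {P : Type} [PartialOrder P]

/-- If in every "large" subset there is a point incomparable to a large subset of it,
then there is an infinite antichain. -/
lemma aux_antichain13 (c : Cardinal.{0}) (h0 : ¬ Cardinal.mk P ≤ c)
    (H : ∀ Y : Set P, ¬ Cardinal.mk Y ≤ c →
      ∃ x ∈ Y, ¬ Cardinal.mk {y ∈ Y | ¬ (x ≤ y ∨ y ≤ x)} ≤ c) :
    ∃ f : ℕ → P, Function.Injective f ∧ IsAntichain (· ≤ ·) (Set.range f) := by
  classical
  choose x hmem hbig using H
  set step : {Y : Set P // ¬ Cardinal.mk Y ≤ c} → {Y : Set P // ¬ Cardinal.mk Y ≤ c} :=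
    fun Y => ⟨{y ∈ Y.1 | ¬ (x Y.1 Y.2 ≤ y ∨ y ≤ x Y.1 Y.2)}, hbig Y.1 Y.2⟩ with hstep
  have h0' : ¬ Cardinal.mk (Set.univ : Set P) ≤ c := by rwa [Cardinal.mk_univ]
  set g : ℕ → {Y : Set P // ¬ Cardinal.mk Y ≤ c} := fun n => step^[n] ⟨Set.univ, h0'⟩ with hg
  have hsucc : ∀ n, g (n + 1) = step (g n) := fun n => Function.iterate_succ_apply' _ _ _
  set f : ℕ → P := fun n => x (g n).1 (g n).2 with hf
  have hfmem : ∀ n, f n ∈ (g n).1 := fun n => hmem _ _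
  have hsub : ∀ n, (g (n + 1)).1 ⊆ (g n).1 := by
    intro n y hy
    rw [hsucc n] at hy
    exact hy.1
  have hmono : Antitone fun n => (g n).1 := antitone_nat_of_succ_le hsub
  have hincomp : ∀ n m, n < m → ¬ (f n ≤ f m ∨ f m ≤ f n) := by
    intro n m hnm
    have h1 : f m ∈ (g (n + 1)).1 := hmono hnm (hfmem m)
    rw [hsucc n] at h1
    exact h1.2
  have hinj : Function.Injective f := by
    intro a b hab
    by_contra hne
    rcases Nat.lt_or_ge a b with h | h
    · exact hincomp a b h (Or.inl (le_of_eq hab))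
    · exact hincomp b a (lt_of_le_of_ne h (Ne.symm hne)) (Or.inl (le_of_eq hab.symm))
  refine ⟨f, hinj, ?_⟩
  rintro _ ⟨n, rfl⟩ _ ⟨m, rfl⟩ hne hle
  have hnm : n ≠ m := fun h => hne (by rw [h])
  rcases Nat.lt_or_ge n m with h | h
  · exact hincomp n m h (Or.inl hle)
  · exact hincomp m n (lt_of_le_of_ne h (Ne.symm hnm)) (Or.inr hle)

end Aux

theorem stmt13 (α : Ordinal.{0}) (hreg : (Cardinal.aleph α).IsRegular)
    (hUT : ∀ (ι γ : Type) (A : ι → Set γ), Cardinal.mk ι ≤ Cardinal.aleph α →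
      (∀ i, Cardinal.mk (A i) ≤ Cardinal.aleph α) →
      Cardinal.mk (⋃ i, A i) ≤ Cardinal.aleph α)
    (P : Type) [PartialOrder P]
    (hwo : ∃ r : P → P → Prop, IsWellOrder P r)
    (hanti : ∀ A : Set P, IsAntichain (· ≤ ·) A → A.Finite)
    (hchain : ∀ C : Set P, IsChain (· ≤ ·) C → Cardinal.mk C ≤ Cardinal.aleph α) :
    Cardinal.mk P ≤ Cardinal.aleph α := by
  classical
  set c := Cardinal.aleph α with hc
  have hc0 : ℵ₀ ≤ c := Cardinal.aleph0_le_aleph α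
  by_contra hP
  by_cases H : ∀ Y : Set P, ¬ Cardinal.mk Y ≤ c →
      ∃ x ∈ Y, ¬ Cardinal.mk {y ∈ Y | ¬ (x ≤ y ∨ y ≤ x)} ≤ c
  · obtain ⟨f, hinj, hA⟩ := aux_antichain13 c hP H
    exact (hanti _ hA).not_infinite (Set.infinite_range_of_injective hinj)
  · push_neg at H
    obtain ⟨Y, hY, hsmall⟩ := H
    -- take a maximal chain inside Y
    set S : Set (Set P) := {C | C ⊆ Y ∧ IsChain (· ≤ ·) C} with hS
    obtain ⟨C, hCmax⟩ := zorn_subset S (by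
      intro ch hchS hch
      refine ⟨⋃₀ ch, ⟨?_, ?_⟩, fun s hs => subset_sUnion_of_mem hs⟩
      · exact sUnion_subset fun s hs => (hchS hs).1
      · intro a ha b hb hne
        obtain ⟨s, hs, has⟩ := ha
        obtain ⟨t, ht, hbt⟩ := hb
        rcases eq_or_ne s t with rfl | hst
        · exact (hchS hs).2 has hbt hne
        · rcases hch hs ht hst with h | h
          · exact (hchS ht).2 (h has) hbt hne
          · exact (hchS hs).2 has (h hbt) hne)
    have hCY : C ⊆ Y := hCmax.1.1
    have hCchain : IsChain (· ≤ ·) C := hCmax.1.2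
    have hCcard : Cardinal.mk C ≤ c := hchain C hCchain
    -- every element of Y is in C or incomparable to some element of C
    have hcover : Y ⊆ C ∪ ⋃ i : C, {y ∈ Y | ¬ ((i : P) ≤ y ∨ y ≤ (i : P))} := by
      intro y hy
      by_cases hyC : y ∈ C
      · exact Or.inl hyC
      · have : ∃ i ∈ C, ¬ ((i : P) ≤ y ∨ y ≤ (i : P)) := by
          by_contra hcomp
          push_neg at hcomp
          have hins : insert y C ∈ S := by
            refine ⟨insert_subset hy hCY, hCchain.insert fun b hb _ => ?_⟩
            rcases hcomp b hb with h | h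
            · exact Or.inr h
            · exact Or.inl h
          have := hCmax.2 hins (subset_insert y C)
          exact hyC (this (mem_insert y C))
        obtain ⟨i, hiC, hi⟩ := this
        exact Or.inr (mem_iUnion.mpr ⟨⟨i, hiC⟩, ⟨hy, hi⟩⟩)
    have hU : Cardinal.mk (⋃ i : C, {y ∈ Y | ¬ ((i : P) ≤ y ∨ y ≤ (i : P))}) ≤ c :=
      hUT C P _ hCcard fun i => by simpa [not_or] using hsmall (i : P) (hCY i.2)
    have : Cardinal.mk Y ≤ c := by
      calc Cardinal.mk Y ≤ Cardinal.mk ((C ∪ ⋃ i : C, {y ∈ Y | ¬ ((i : P) ≤ y ∨ y ≤ (i : P))} : Set P)) :=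
            Cardinal.mk_le_mk_of_subset hcover
        _ ≤ Cardinal.mk C + Cardinal.mk (⋃ i : C, {y ∈ Y | ¬ ((i : P) ≤ y ∨ y ≤ (i : P))}) :=
            Cardinal.mk_union_le _ _
        _ ≤ c := Cardinal.add_le_of_le hc0 hCcard hU
    exact hY.not_ge this
end
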